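/- Let G be a discrete group, X a set, and C the universal C*-algebra generated by positive contractions {c_{x,g} : (x,g) ∈ X × G}, equipped with the G-action determined on generators by h · c_{x,g} = c_{x,hg}. Then C is equivariantly projective: for every G-C*-algebra B with G-invariant closed two-sided ideal J and every G-equivariant *-homomorphism φ : C → B/J, there is a G-equivariant *-homomorphism ψ : C → B with q ∘ ψ = φ, where q : B → B/J is the quotient map. -/
import Mathlib

open scoped CStarAlgebra

universe u

/-- A positive contraction in a quotient lifts to a positive contraction. -/
lemma lift_pos_contraction {B Q : Type u} [NonUnitalCStarAlgebra B] [NonUnitalCStarAlgebra Q]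
    (q : B →⋆ₙₐ[ℂ] Q) (hq : Function.Surjective q) (y : Q)
    (hy : ∃ e : Q, y = star e * e) (hny : ‖y‖ ≤ 1) :
    ∃ b : B, (∃ e : B, b = star e * e) ∧ ‖b‖ ≤ 1 ∧ q b = y := by
  obtain ⟨e, rfl⟩ := hy
  obtain ⟨a, ha⟩ := hq e
  set s : B := star a * a with hs
  have hqs : q s = star e * e := by rw [hs, map_mul, map_star, ha]
  set f : ℝ → ℝ := fun t => min (max t 0) 1 with hf
  have hf_cont : Continuous f := (continuous_id.max continuous_const).min continuous_const
  have hf0 : f 0 = 0 := by simp [hf]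
  have hs_sa : IsSelfAdjoint s := IsSelfAdjoint.star_mul_self a
  have hy_sa : IsSelfAdjoint (star e * e) := IsSelfAdjoint.star_mul_self e
  refine ⟨cfcₙ f s, ?_, ?_, ?_⟩
  · set g : ℝ → ℝ := fun t => Real.sqrt (min (max t 0) 1) with hg
    have hg_cont : Continuous g := Real.continuous_sqrt.comp hf_cont
    have hg0 : g 0 = 0 := by simp [hg, hf0]
    refine ⟨cfcₙ g s, ?_⟩
    have h1 : cfcₙ f s = cfcₙ (fun t => g t * g t) s := by
      apply cfcₙ_congr
      intro t _
      show f t = g t * g t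
      simp only [hg, hf]
      exact (Real.mul_self_sqrt (le_min (le_max_right t 0) zero_le_one)).symm
    have h2 : IsSelfAdjoint (cfcₙ g s) := cfcₙ_predicate g s
    rw [h1, cfcₙ_mul g g s, h2.star_eq]
  · refine norm_cfcₙ_le fun t _ => ?_
    rw [Real.norm_eq_abs, abs_le]
    constructor
    · linarith [le_min (le_max_right t 0) zero_le_one]
    · exact min_le_right _ _
  · have hcomm : q (cfcₙ f s) = cfcₙ f (q s) := by
      refine NonUnitalStarAlgHom.map_cfcₙ q f s hf_cont.continuousOn hf0 (map_continuous q) hs_sa ?_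
      rw [hqs]; exact hy_sa
    rw [hcomm, hqs]
    have : ∀ t ∈ quasispectrum ℝ (star e * e), f t = t := by
      intro t ht
      have ht0 : 0 ≤ t := by
        rw [Unitization.quasispectrum_eq_spectrum_inr' ℝ ℂ] at ht
        have : ((star e * e : Q) : Unitization ℂ Q) = star (e : Unitization ℂ Q) * (e : Unitization ℂ Q) := by
          simp [Unitization.inr_mul, Unitization.inr_star]
        rw [this] at ht
        exact spectrum_star_mul_self_nonneg t ht
      have ht1 : t ≤ 1 := by
        have := norm_apply_le_norm_cfcₙ (id : ℝ → ℝ) (star e * e) ht continuous_id.continuousOn rfl hy_sa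
        rw [cfcₙ_id ℝ (star e * e)] at this
        calc t = ‖(id t : ℝ)‖ := by simp [Real.norm_eq_abs, abs_of_nonneg ht0]
        _ ≤ ‖star e * e‖ := this
        _ ≤ 1 := hny
      simp [hf, max_eq_left ht0, min_eq_left ht1]
    rw [cfcₙ_congr this, cfcₙ_id' ℝ (star e * e)]

/-- Let `G` be a discrete group and let `C` be the universal C*-algebra generated by positive
contractions `{c_{x,g} : (x,g) ∈ X × G}` (specified here via its universal property), with the
`G`-action determined by `h · c_{x,g} = c_{x,hg}`.  Then `C` is equivariantly projective: every
equivariant *-homomorphism from `C` to a quotient `Q = B/J` of a `G`-C*-algebra `B` by a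
`G`-invariant ideal (i.e. along an equivariant surjection `q : B → Q`) lifts to an equivariant
*-homomorphism `C → B`. -/
theorem stmt14 {G : Type u} [Group G] (X : Type u)
    {C : Type u} [NonUnitalCStarAlgebra C]
    (β : G → (C ≃⋆ₐ[ℂ] C))
    (hβ_one : ∀ x : C, β 1 x = x)
    (hβ_mul : ∀ g h : G, ∀ x : C, β (g * h) x = β g (β h x))
    (c : X × G → C)
    (hpos : ∀ y, (∃ d : C, c y = star d * d) ∧ ‖c y‖ ≤ 1)
    (hact : ∀ (h : G) (x : X) (g : G), β h (c (x, g)) = c (x, h * g))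
    (huniv : ∀ (D : Type u) [NonUnitalCStarAlgebra D], ∀ d : X × G → D,
      (∀ y, (∃ e : D, d y = star e * e) ∧ ‖d y‖ ≤ 1) →
        ∃! ψ : C →⋆ₙₐ[ℂ] D, ∀ y, ψ (c y) = d y)
    {B Q : Type u} [NonUnitalCStarAlgebra B] [NonUnitalCStarAlgebra Q]
    (βB : G → (B ≃⋆ₐ[ℂ] B))
    (hβB_one : ∀ x : B, βB 1 x = x)
    (hβB_mul : ∀ g h : G, ∀ x : B, βB (g * h) x = βB g (βB h x))
    (βQ : G → (Q ≃⋆ₐ[ℂ] Q))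
    (hβQ_one : ∀ x : Q, βQ 1 x = x)
    (hβQ_mul : ∀ g h : G, ∀ x : Q, βQ (g * h) x = βQ g (βQ h x))
    (q : B →⋆ₙₐ[ℂ] Q) (hq : Function.Surjective q)
    (hqe : ∀ g b, q (βB g b) = βQ g (q b))
    (φ : C →⋆ₙₐ[ℂ] Q) (hφe : ∀ g x, φ (β g x) = βQ g (φ x)) :
    ∃ ψ : C →⋆ₙₐ[ℂ] B, (∀ g x, ψ (β g x) = βB g (ψ x)) ∧ ∀ x, q (ψ x) = φ x := by
  -- Step 1: lift each φ (c (x, 1)) to a positive contraction in B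
  have hφc : ∀ x : X, ∃ b : B, (∃ e : B, b = star e * e) ∧ ‖b‖ ≤ 1 ∧ q b = φ (c (x, 1)) := by
    intro x
    refine lift_pos_contraction q hq _ ?_ ?_
    · obtain ⟨d, hd⟩ := (hpos (x, 1)).1
      exact ⟨φ d, by rw [hd, map_mul, map_star]⟩
    · exact (NonUnitalStarAlgHom.norm_apply_le φ _).trans (hpos (x, 1)).2
  choose b hb_pos hb_norm hb_q using hφc
  -- the family of positive contractions in B
  have hfam : ∀ (k : G → G) (y : X × G),
      (∃ e : B, βB (k y.2) (b y.1) = star e * e) ∧ ‖βB (k y.2) (b y.1)‖ ≤ 1 := by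
    rintro k ⟨x, g⟩
    constructor
    · obtain ⟨e, he⟩ := hb_pos x
      exact ⟨βB (k g) e, by rw [he, map_mul, map_star]⟩
    · exact le_of_eq_of_le (StarAlgEquiv.norm_map (βB (k g)) (b x)) (hb_norm x)
  obtain ⟨ψ, hψ, -⟩ := huniv B (fun y => βB y.2 (b y.1)) (hfam id)
  refine ⟨ψ, ?_, ?_⟩
  · -- equivariance
    intro g z
    obtain ⟨ψg, hψg, hψgu⟩ := huniv B (fun y => βB (g * y.2) (b y.1)) (hfam (g * ·))
    have h1 : ψ.comp ((β g : C ≃⋆ₐ[ℂ] C) : C →⋆ₙₐ[ℂ] C) = ψg := by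
      refine hψgu _ ?_
      rintro ⟨x, h⟩
      simp only [NonUnitalStarAlgHom.comp_apply]
      show ψ (β g (c (x, h))) = βB (g * h) (b x)
      rw [hact g x h, hψ (x, g * h)]
    have h2 : ((βB g : B ≃⋆ₐ[ℂ] B) : B →⋆ₙₐ[ℂ] B).comp ψ = ψg := by
      refine hψgu _ ?_
      rintro ⟨x, h⟩
      simp only [NonUnitalStarAlgHom.comp_apply]
      show βB g (ψ (c (x, h))) = βB (g * h) (b x)
      rw [hψ (x, h), hβB_mul g h (b x)]
    exact DFunLike.congr_fun (h1.trans h2.symm) z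
  · -- lifting property
    intro z
    have hfamQ : ∀ y : X × G, (∃ e : Q, φ (c y) = star e * e) ∧ ‖φ (c y)‖ ≤ 1 := by
      intro y
      constructor
      · obtain ⟨d, hd⟩ := (hpos y).1
        exact ⟨φ d, by rw [hd, map_mul, map_star]⟩
      · exact (NonUnitalStarAlgHom.norm_apply_le φ _).trans (hpos y).2
    obtain ⟨ψ₀, hψ₀, hψ₀u⟩ := huniv Q (fun y => φ (c y)) hfamQ
    have h1 : q.comp ψ = ψ₀ := by
      refine hψ₀u _ ?_
      rintro ⟨x, g⟩
      simp only [NonUnitalStarAlgHom.comp_apply]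
      rw [hψ (x, g), hqe g (b x), hb_q x, ← hφe g (c (x, 1)), hact g x 1, mul_one]
    have h2 : φ = ψ₀ := hψ₀u φ fun y => rfl
    exact DFunLike.congr_fun (h1.trans h2.symm) z
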